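/- arXiv:0910.0078 — 4 statements merged into one kernel-verified Lean document; each statement's English description precedes it below -/
import Mathlib

section
/- For a formal complex structure c = (c₁, c₂, …) satisfying the structural equation dc_k = ∑_{i=1}^{k−1} c_i ∘ c_{k−i} for all k, and a second formal complex structure c' with the same relation, and elements h₁ = 0, h₂, …, h_{k−1} satisfying c_i − c'_i = dh_i + ∑_{j=1}^{i−1}(c'_j ∘ h_{i−j} + h_j ∘ c_{i−j}) for all i < k, the element c_k − c'_k − ∑_{i=1}^{k−1}(c'_i ∘ h_{k−i} + h_i ∘ c_{k−i}) is a cocycle, i.e., its differential vanishes. -/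
open Finset in
lemma swap_lemma_obstruction {E : Type} [AddCommMonoid E] (k : ℕ) (f : ℕ → ℕ → ℕ → E) :
    ∑ i ∈ Icc 1 (k-1), ∑ j ∈ Icc 1 (k-i-1), f i j (k-i-j)
      = ∑ i ∈ Icc 1 (k-1), ∑ j ∈ Icc 1 (i-1), f j (i-j) (k-i) := by
  rw [Finset.sum_sigma', Finset.sum_sigma']
  apply Finset.sum_nbij' (fun p => (⟨p.1 + p.2, p.1⟩ : Σ _ : ℕ, ℕ))
    (fun p => (⟨p.2, p.1 - p.2⟩ : Σ _ : ℕ, ℕ))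
  · rintro ⟨a, b⟩ hp
    simp only [Finset.mem_sigma, Finset.mem_Icc] at hp ⊢
    obtain ⟨⟨h1, h2⟩, h3, h4⟩ := hp
    refine ⟨⟨?_, ?_⟩, ?_, ?_⟩ <;> omega
  · rintro ⟨a, b⟩ hp
    simp only [Finset.mem_sigma, Finset.mem_Icc] at hp ⊢
    obtain ⟨⟨h1, h2⟩, h3, h4⟩ := hp
    refine ⟨⟨?_, ?_⟩, ?_, ?_⟩ <;> omega
  · rintro ⟨a, b⟩ hp
    simp only [Finset.mem_sigma, Finset.mem_Icc] at hp
    obtain ⟨⟨h1, h2⟩, h3, h4⟩ := hp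
    dsimp only
    have hab : a + b - a = b := by omega
    rw [hab]
  · rintro ⟨a, b⟩ hp
    simp only [Finset.mem_sigma, Finset.mem_Icc] at hp
    obtain ⟨⟨h1, h2⟩, h3, h4⟩ := hp
    dsimp only
    have hab : b + (a - b) = a := by omega
    rw [hab]
  · rintro ⟨a, b⟩ hp
    simp only [Finset.mem_sigma, Finset.mem_Icc] at hp
    obtain ⟨⟨h1, h2⟩, h3, h4⟩ := hp
    dsimp only
    have h5 : a + b - a = b := by omega
    have h6 : k - a - b = k - (a + b) := by omega
    rw [h5, h6]

/-- In a bigraded differential algebra over `F₂` (graded pieces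
`CE i k`, differential `dE` raising the first degree by one, associative
composition given by the ring multiplication, satisfying the Leibniz rule),
given formal complex structures `c, c'` (with `dc_m = ∑_{i=1}^{m-1} c_i ∘ c_{m-i}`)
and a partial homotopy `h` up to level `k`, the element
`c_k − c'_k − ∑_{i=1}^{k−1} (c'_i ∘ h_{k−i} + h_i ∘ c_{k−i})` is a cocycle. -/
theorem formal_structure_obstruction_is_cocycle
    {E : Type} [NonUnitalRing E] [Module (ZMod 2) E]
    (CE : ℤ → ℕ → Submodule (ZMod 2) E)
    (dE : E →ₗ[ZMod 2] E)
    (hd2 : ∀ a, dE (dE a) = 0)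
    (hLeib : ∀ a b : E, dE (a * b) = dE a * b + a * dE b)
    (hdgr : ∀ (i : ℤ) (k : ℕ), ∀ x ∈ CE i k, dE x ∈ CE (i + 1) k)
    (hmulgr : ∀ (i j : ℤ) (k l : ℕ), ∀ x ∈ CE i k, ∀ y ∈ CE j l,
      x * y ∈ CE (i + j) (k + l))
    (c c' h : ℕ → E) (k : ℕ) (hk : 1 ≤ k)
    (hc : ∀ m : ℕ, c m ∈ CE (1 - (m : ℤ)) m)
    (hc' : ∀ m : ℕ, c' m ∈ CE (1 - (m : ℤ)) m)
    (hh : ∀ m : ℕ, h m ∈ CE (-(m : ℤ)) m)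
    (hstruct : ∀ m, 1 ≤ m → dE (c m) = ∑ i ∈ Finset.Icc 1 (m - 1), c i * c (m - i))
    (hstruct' : ∀ m, 1 ≤ m → dE (c' m) = ∑ i ∈ Finset.Icc 1 (m - 1), c' i * c' (m - i))
    (hh1 : h 1 = 0)
    (hhom : ∀ i, 1 ≤ i → i < k →
      c i - c' i = dE (h i) + ∑ j ∈ Finset.Icc 1 (i - 1),
        (c' j * h (i - j) + h j * c (i - j))) :
    dE (c k - c' k - ∑ i ∈ Finset.Icc 1 (k - 1),
      (c' i * h (k - i) + h i * c (k - i))) = 0 := by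
  -- characteristic 2
  have h2 : ∀ a : E, a + a = 0 := by
    intro a
    have : ((2 : ℕ) : ZMod 2) • a = (2 : ℕ) • a := Nat.cast_smul_eq_nsmul _ _ _
    rw [show ((2:ℕ) : ZMod 2) = 0 by decide, zero_smul] at this
    rw [← two_nsmul]
    exact this.symm
  have hneg : ∀ a : E, -a = a := fun a => by
    rw [neg_eq_iff_add_eq_zero]; exact h2 a
  have hsub : ∀ a b : E, a - b = a + b := fun a b => by
    rw [sub_eq_add_neg, hneg]
  -- formula for dE (h m)
  have hdh : ∀ m, 1 ≤ m → m < k → dE (h m)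
      = c m + c' m + ∑ j ∈ Finset.Icc 1 (m - 1), (c' j * h (m - j) + h j * c (m - j)) := by
    intro m h1 h2'
    have := hhom m h1 h2'
    have e : dE (h m) = (c m - c' m) - ∑ j ∈ Finset.Icc 1 (m - 1),
        (c' j * h (m - j) + h j * c (m - j)) := by
      rw [this]; abel
    rw [e, hsub, hsub]
  -- expand each summand
  have key : ∀ i ∈ Finset.Icc 1 (k-1), dE (c' i * h (k-i) + h i * c (k-i)) =
      (∑ j ∈ Finset.Icc 1 (i-1), c' j * c' (i-j)) * h (k-i)
      + c' i * (c (k-i) + c' (k-i)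
          + ∑ j ∈ Finset.Icc 1 (k-i-1), (c' j * h (k-i-j) + h j * c (k-i-j)))
      + ((c i + c' i + ∑ j ∈ Finset.Icc 1 (i-1), (c' j * h (i-j) + h j * c (i-j))) * c (k-i)
      + h i * (∑ j ∈ Finset.Icc 1 (k-i-1), c j * c (k-i-j))) := by
    intro i hi
    rw [Finset.mem_Icc] at hi
    obtain ⟨hi1, hi2⟩ := hi
    have hki1 : 1 ≤ k - i := by omega
    have hkik : k - i < k := by omega
    have hik : i < k := by omega
    rw [map_add, hLeib, hLeib, hstruct' i hi1, hstruct (k-i) hki1,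
      hdh (k-i) hki1 hkik, hdh i hi1 hik]
  rw [hsub, hsub, map_add, map_add, map_sum, Finset.sum_congr rfl key,
    hstruct k hk, hstruct' k hk]
  -- distribute
  simp only [mul_add, add_mul, Finset.sum_add_distrib, Finset.sum_mul, Finset.mul_sum,
    mul_assoc]
  -- reindex the three double sums
  rw [swap_lemma_obstruction k (fun a b c0 => c' a * (c' b * h c0)),
    swap_lemma_obstruction k (fun a b c0 => c' a * (h b * c c0)),
    swap_lemma_obstruction k (fun a b c0 => h a * (c b * c c0))]
  have final : ∀ A B Q1 Q2 Q3 Q4 : E,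
      A + B + (Q1 + (Q2 + B + (Q1 + Q3)) + (A + Q2 + (Q3 + Q4) + Q4)) = 0 := by
    intro A B Q1 Q2 Q3 Q4
    have e : A + B + (Q1 + (Q2 + B + (Q1 + Q3)) + (A + Q2 + (Q3 + Q4) + Q4))
        = (A + A) + ((B + B) + ((Q1 + Q1) + ((Q2 + Q2) + ((Q3 + Q3) + (Q4 + Q4))))) := by
      abel
    rw [e, h2, h2, h2, h2, h2, h2]
    simp
  exact final _ _ _ _ _ _
end

section
/- Suppose in a bigraded differential algebra (CE^d(k), d, ∘) over F₂ satisfying d² = 0 and the Leibniz rule, the cohomology H^{1−k}(CE(·,k)) vanishes for all k in the range 2 ≤ k ≤ K. Then any two formal complex structures c, c' (sequences c_k, c'_k ∈ CE^{1−k}(k) for 1 ≤ k ≤ K with c₁ = c'₁ and dc_k = ∑_{i=1}^{k−1} c_i ∘ c_{k−i}, similarly for c') are homotopic: there exist h_k ∈ CE^{−k}(k), 1 ≤ k ≤ K, with h₁ = 0 and c_k − c'_k = dh_k + ∑_{i=1}^{k−1}(c'_i ∘ h_{k−i} + h_i ∘ c_{k−i}). -/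
/-!
The homotopy `h` is built weight by weight, starting from `h 1 = 0` (possible since
`c 1 = c' 1`). Once `h 1, …, h (m-1)` satisfy the homotopy equation, the element
`z = c m + c' m + ∑ (c' i * h (m - i) + h i * c (m - i))` lies in `CE (1 - m) m` and is a cocycle:
expanding `d z` with the Leibniz rule and substituting the structure equations for `d c`, `d c'`
and the homotopy equations for `d h` in lower weights, every term appears twice. By the vanishing
of cohomology, `z = d y` for some `y ∈ CE (-m) m`, and `h m := y` is the homotopy equation in
weight `m` over `𝔽₂`.
-/

namespace FormalComplexStructure

section CauchyProd

variable {E : Type*}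

def cauchyProd [Mul E] [AddCommMonoid E] (a b : ℕ → E) (m : ℕ) : E :=
  ∑ i ∈ Finset.Icc 1 (m - 1), a i * b (m - i)

section NonUnitalNonAssocSemiring

variable [NonUnitalNonAssocSemiring E]

@[simp]
theorem cauchyProd_one (a b : ℕ → E) : cauchyProd a b 1 = 0 := by
  simp [cauchyProd]

theorem cauchyProd_add_left (a a' b : ℕ → E) :
    cauchyProd (a + a') b = cauchyProd a b + cauchyProd a' b := by
  ext m
  simp only [cauchyProd, Pi.add_apply, add_mul, Finset.sum_add_distrib]

theorem cauchyProd_add_right (a b b' : ℕ → E) :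
    cauchyProd a (b + b') = cauchyProd a b + cauchyProd a b' := by
  ext m
  simp only [cauchyProd, Pi.add_apply, mul_add, Finset.sum_add_distrib]

theorem cauchyProd_congr {a a' b b' : ℕ → E} {m : ℕ}
    (ha : ∀ i, 0 < i → i < m → a i = a' i) (hb : ∀ i, 0 < i → i < m → b i = b' i) :
    cauchyProd a b m = cauchyProd a' b' m :=
  Finset.sum_congr rfl fun i hi => by
    rw [Finset.mem_Icc] at hi
    rw [ha i (by omega) (by omega), hb (m - i) (by omega) (by omega)]

theorem map_cauchyProd {F : Type*} [FunLike F E E] [AddMonoidHomClass F E E] (d : F)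
    (hd : ∀ x y, d (x * y) = d x * y + x * d y) (a b : ℕ → E) (m : ℕ) :
    d (cauchyProd a b m) =
      cauchyProd (fun i => d (a i)) b m + cauchyProd a (fun i => d (b i)) m := by
  simp only [cauchyProd, map_sum, hd, Finset.sum_add_distrib]

theorem cauchyProd_mem {R : Type*} [Semiring R] [Module R E] (CE : ℤ → ℕ → Submodule R E)
    (hmul : ∀ (i j : ℤ) (k l : ℕ), ∀ x ∈ CE i k, ∀ y ∈ CE j l, x * y ∈ CE (i + j) (k + l))
    {a b : ℕ → E} {α β : ℕ → ℤ} {γ : ℤ} {m : ℕ}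
    (ha : ∀ i, 0 < i → i < m → a i ∈ CE (α i) i) (hb : ∀ i, 0 < i → i < m → b i ∈ CE (β i) i)
    (hdeg : ∀ i, 0 < i → i < m → α i + β (m - i) = γ) :
    cauchyProd a b m ∈ CE γ m := by
  refine Submodule.sum_mem _ fun i hi => ?_
  rw [Finset.mem_Icc] at hi
  have := hmul _ _ _ _ _ (ha i (by omega) (by omega)) _ (hb (m - i) (by omega) (by omega))
  rwa [hdeg i (by omega) (by omega), Nat.add_sub_cancel' (by omega)] at this

end NonUnitalNonAssocSemiring

theorem cauchyProd_assoc [NonUnitalSemiring E] (a b e : ℕ → E) :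
    cauchyProd (cauchyProd a b) e = cauchyProd a (cauchyProd b e) := by
  ext m
  simp only [cauchyProd, Finset.sum_mul, Finset.mul_sum]
  rw [Finset.sum_sigma', Finset.sum_sigma']
  refine Finset.sum_nbij' (fun p => ⟨p.2, p.1 - p.2⟩) (fun p => ⟨p.1 + p.2, p.1⟩)
    ?_ ?_ ?_ ?_ ?_ <;> rintro ⟨i, j⟩ hp <;> simp only [Finset.mem_sigma, Finset.mem_Icc] at hp ⊢
  · omega
  · omega
  · simp only [Sigma.mk.injEq, heq_eq_eq, and_true]; omega
  · simp only [Nat.add_sub_cancel_left]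
  · rw [mul_assoc, Nat.sub_sub, Nat.add_sub_cancel' (by omega)]

end CauchyProd

section Obstruction

variable {E : Type*} [NonUnitalNonAssocSemiring E]

/-- The homotopy equation in weight `m` reads `d (h m) = obstruction c c' h m` (signs are
irrelevant over `𝔽₂`). -/
def obstruction (c c' h : ℕ → E) : ℕ → E :=
  c + c' + cauchyProd c' h + cauchyProd h c

theorem obstruction_congr (c c' : ℕ → E) {h h' : ℕ → E} {m : ℕ}
    (hh : ∀ j, 0 < j → j < m → h j = h' j) :
    obstruction c c' h m = obstruction c c' h' m := by
  simp only [obstruction, Pi.add_apply,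
    cauchyProd_congr (fun _ _ _ => rfl) hh, cauchyProd_congr hh (fun _ _ _ => rfl)]

theorem obstruction_mem {R : Type*} [Semiring R] [Module R E] (CE : ℤ → ℕ → Submodule R E)
    (hmul : ∀ (i j : ℤ) (k l : ℕ), ∀ x ∈ CE i k, ∀ y ∈ CE j l, x * y ∈ CE (i + j) (k + l))
    {c c' h : ℕ → E} {m : ℕ} (hc : ∀ j : ℕ, c j ∈ CE (1 - (j : ℤ)) j)
    (hc' : ∀ j : ℕ, c' j ∈ CE (1 - (j : ℤ)) j)
    (hh : ∀ j, 0 < j → j < m → h j ∈ CE (-(j : ℤ)) j) :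
    obstruction c c' h m ∈ CE (1 - (m : ℤ)) m := by
  have hdeg : ∀ i, 0 < i → i < m → 1 - (i : ℤ) + -((m - i : ℕ) : ℤ) = 1 - m := by omega
  have hdeg' : ∀ i, 0 < i → i < m → -(i : ℤ) + (1 - ((m - i : ℕ) : ℤ)) = 1 - m := by omega
  exact add_mem (add_mem (add_mem (hc m) (hc' m))
    (cauchyProd_mem CE hmul (fun i _ _ => hc' i) hh hdeg))
    (cauchyProd_mem CE hmul hh (fun i _ _ => hc i) hdeg')

end Obstruction

section Homotopy

variable {E : Type*} [NonUnitalRing E] [Module (ZMod 2) E]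

/-- Every term of `d (obstruction c c' h m)` occurs twice, by associativity of `cauchyProd`. -/
theorem map_obstruction_eq_zero {F : Type*} [FunLike F E E] [AddMonoidHomClass F E E] (d : F)
    (hd : ∀ x y, d (x * y) = d x * y + x * d y) {c c' h : ℕ → E} {m : ℕ} (hm : 0 < m)
    (hdc : ∀ j, 0 < j → j ≤ m → d (c j) = cauchyProd c c j)
    (hdc' : ∀ j, 0 < j → j ≤ m → d (c' j) = cauchyProd c' c' j)
    (hdh : ∀ j, 0 < j → j < m → d (h j) = obstruction c c' h j) :
    d (obstruction c c' h m) = 0 := by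
  simp only [obstruction, Pi.add_apply, map_add, map_cauchyProd d hd]
  rw [hdc m hm le_rfl, hdc' m hm le_rfl,
    cauchyProd_congr (fun j hj hjm => hdc' j hj hjm.le) (fun _ _ _ => rfl),
    cauchyProd_congr (fun _ _ _ => rfl) hdh, cauchyProd_congr hdh (fun _ _ _ => rfl),
    cauchyProd_congr (fun _ _ _ => rfl) (fun j hj hjm => hdc j hj hjm.le)]
  simp only [obstruction, cauchyProd_add_left, cauchyProd_add_right, cauchyProd_assoc,
    Pi.add_apply]
  abel_nf
  simp only [two_zsmul, ZModModule.add_self]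

theorem sub_eq_add_sum_of_eq_obstruction {c c' h : ℕ → E} {m : ℕ} {x : E}
    (hx : x = obstruction c c' h m) :
    c m - c' m = x + ∑ i ∈ Finset.Icc 1 (m - 1), (c' i * h (m - i) + h i * c (m - i)) := by
  rw [Finset.sum_add_distrib, hx, ZModModule.sub_eq_add]
  simp only [obstruction, Pi.add_apply, cauchyProd]
  abel_nf
  simp only [two_zsmul, ZModModule.add_self, add_zero]

variable (CE : ℤ → ℕ → Submodule (ZMod 2) E) (d : E →ₗ[ZMod 2] E) (c c' : ℕ → E)

def IsPartialHomotopy (h : ℕ → E) (n : ℕ) : Prop :=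
  h 1 = 0 ∧ ∀ j, 0 < j → j < n → h j ∈ CE (-(j : ℤ)) j ∧ d (h j) = obstruction c c' h j

variable {CE d c c'}

theorem IsPartialHomotopy.succ {h : ℕ → E} {n : ℕ} (H : IsPartialHomotopy CE d c c' h n)
    (hmem : h n ∈ CE (-(n : ℤ)) n) (hd : d (h n) = obstruction c c' h n) :
    IsPartialHomotopy CE d c c' h (n + 1) := by
  refine ⟨H.1, fun j hj hjn => ?_⟩
  rcases Nat.lt_succ_iff_lt_or_eq.mp hjn with hjn | rfl
  · exact H.2 j hj hjn
  · exact ⟨hmem, hd⟩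

theorem IsPartialHomotopy.update {h : ℕ → E} {n : ℕ} (H : IsPartialHomotopy CE d c c' h n)
    (hn : 1 < n) (y : E) : IsPartialHomotopy CE d c c' (Function.update h n y) n := by
  have hh : ∀ j, j < n → Function.update h n y j = h j := fun j hj =>
    Function.update_of_ne hj.ne _ _
  refine ⟨by rw [hh 1 hn, H.1], fun j hj hjn => ?_⟩
  rw [hh j hjn, obstruction_congr c c' fun i _ hi => hh i (hi.trans hjn)]
  exact H.2 j hj hjn

theorem IsPartialHomotopy.exists_succ
    (hmul : ∀ (i j : ℤ) (k l : ℕ), ∀ x ∈ CE i k, ∀ y ∈ CE j l, x * y ∈ CE (i + j) (k + l))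
    (hd : ∀ x y, d (x * y) = d x * y + x * d y)
    (hc : ∀ j : ℕ, c j ∈ CE (1 - (j : ℤ)) j) (hc' : ∀ j : ℕ, c' j ∈ CE (1 - (j : ℤ)) j)
    (hc1 : c 1 = c' 1) {h : ℕ → E} {m : ℕ} (H : IsPartialHomotopy CE d c c' h m) (hm : 0 < m)
    (hdc : ∀ j, 0 < j → j ≤ m → d (c j) = cauchyProd c c j)
    (hdc' : ∀ j, 0 < j → j ≤ m → d (c' j) = cauchyProd c' c' j)
    (hvanish : 2 ≤ m → ∀ x ∈ CE (1 - (m : ℤ)) m, d x = 0 → ∃ y ∈ CE (-(m : ℤ)) m, d y = x) :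
    ∃ h', IsPartialHomotopy CE d c c' h' (m + 1) := by
  obtain rfl | hm : m = 1 ∨ 2 ≤ m := by omega
  · refine ⟨h, H.succ ?_ ?_⟩ <;> rw [H.1]
    · exact zero_mem _
    · simp only [obstruction, Pi.add_apply, cauchyProd_one, hc1, ZModModule.add_self, map_zero]
  obtain ⟨y, hy, hdy⟩ := hvanish hm _
    (obstruction_mem CE hmul hc hc' fun j hj hjm => (H.2 j hj hjm).1)
    (map_obstruction_eq_zero d hd (by omega) hdc hdc' fun j hj hjm => (H.2 j hj hjm).2)
  refine ⟨Function.update h m y, (H.update hm y).succ ?_ ?_⟩ <;> rw [Function.update_self]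
  · exact hy
  · rw [hdy]
    exact obstruction_congr c c' fun j _ hjm => (Function.update_of_ne hjm.ne _ _).symm

end Homotopy

end FormalComplexStructure

open FormalComplexStructure

theorem formal_complex_structures_homotopic_general
    {E : Type} [NonUnitalRing E] [Module (ZMod 2) E]
    (CE : ℤ → ℕ → Submodule (ZMod 2) E)
    (dE : E →ₗ[ZMod 2] E)
    (hLeib : ∀ a b : E, dE (a * b) = dE a * b + a * dE b)
    (hmulgr : ∀ (i j : ℤ) (k l : ℕ), ∀ x ∈ CE i k, ∀ y ∈ CE j l,
      x * y ∈ CE (i + j) (k + l))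
    (K : ℕ)
    (hvanish : ∀ k : ℕ, 2 ≤ k → k ≤ K →
      ∀ x ∈ CE (1 - (k : ℤ)) k, dE x = 0 → ∃ y ∈ CE (-(k : ℤ)) k, dE y = x)
    (c c' : ℕ → E)
    (hc : ∀ m : ℕ, c m ∈ CE (1 - (m : ℤ)) m)
    (hc' : ∀ m : ℕ, c' m ∈ CE (1 - (m : ℤ)) m)
    (hc1 : c 1 = c' 1)
    (hstruct : ∀ m, 1 ≤ m → m ≤ K →
      dE (c m) = ∑ i ∈ Finset.Icc 1 (m - 1), c i * c (m - i))
    (hstruct' : ∀ m, 1 ≤ m → m ≤ K →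
      dE (c' m) = ∑ i ∈ Finset.Icc 1 (m - 1), c' i * c' (m - i)) :
    ∃ h : ℕ → E, h 1 = 0 ∧
      (∀ m : ℕ, 1 ≤ m → m ≤ K → h m ∈ CE (-(m : ℤ)) m) ∧
      (∀ m : ℕ, 1 ≤ m → m ≤ K →
        c m - c' m = dE (h m) + ∑ i ∈ Finset.Icc 1 (m - 1),
          (c' i * h (m - i) + h i * c (m - i))) := by
  have exists_partial : ∀ n ≤ K, ∃ h, IsPartialHomotopy CE dE c c' h (n + 1) := by
    intro n hn
    induction n with
    | zero => exact ⟨0, rfl, fun j hj hj1 => by omega⟩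
    | succ n ih =>
      obtain ⟨h, H⟩ := ih (by omega)
      exact H.exists_succ hmulgr hLeib hc hc' hc1 n.succ_pos
        (fun j hj hjn => hstruct j hj (by omega)) (fun j hj hjn => hstruct' j hj (by omega))
        fun hn2 => hvanish _ hn2 hn
  obtain ⟨h, h1, H⟩ := exists_partial K le_rfl
  exact ⟨h, h1, fun m hm hmK => (H m hm (by omega)).1,
    fun m hm hmK => sub_eq_add_sum_of_eq_obstruction (H m hm (by omega)).2⟩

/-- Lemma 4.1 of Manolescu–Ozsváth–Thurston: In a bigraded
differential algebra over `F₂` in which the cohomology vanishes in degree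
`1−k` for `2 ≤ k ≤ K` (every cocycle in `CE^{1-k}(k)` is the differential of
an element of `CE^{-k}(k)`), any two formal complex structures `c, c'` with
`c₁ = c'₁` are homotopic. -/
theorem formal_complex_structures_homotopic
    {E : Type} [NonUnitalRing E] [Module (ZMod 2) E]
    (CE : ℤ → ℕ → Submodule (ZMod 2) E)
    (dE : E →ₗ[ZMod 2] E)
    (hd2 : ∀ a, dE (dE a) = 0)
    (hLeib : ∀ a b : E, dE (a * b) = dE a * b + a * dE b)
    (hdgr : ∀ (i : ℤ) (k : ℕ), ∀ x ∈ CE i k, dE x ∈ CE (i + 1) k)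
    (hmulgr : ∀ (i j : ℤ) (k l : ℕ), ∀ x ∈ CE i k, ∀ y ∈ CE j l,
      x * y ∈ CE (i + j) (k + l))
    (K : ℕ)
    (hvanish : ∀ k : ℕ, 2 ≤ k → k ≤ K →
      ∀ x ∈ CE (1 - (k : ℤ)) k, dE x = 0 → ∃ y ∈ CE (-(k : ℤ)) k, dE y = x)
    (c c' : ℕ → E)
    (hc : ∀ m : ℕ, c m ∈ CE (1 - (m : ℤ)) m)
    (hc' : ∀ m : ℕ, c' m ∈ CE (1 - (m : ℤ)) m)
    (hc1 : c 1 = c' 1)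
    (hstruct : ∀ m, 1 ≤ m → m ≤ K →
      dE (c m) = ∑ i ∈ Finset.Icc 1 (m - 1), c i * c (m - i))
    (hstruct' : ∀ m, 1 ≤ m → m ≤ K →
      dE (c' m) = ∑ i ∈ Finset.Icc 1 (m - 1), c' i * c' (m - i)) :
    ∃ h : ℕ → E, h 1 = 0 ∧
      (∀ m : ℕ, 1 ≤ m → m ≤ K → h m ∈ CE (-(m : ℤ)) m) ∧
      (∀ m : ℕ, 1 ≤ m → m ≤ K →
        c m - c' m = dE (h m) + ∑ i ∈ Finset.Icc 1 (m - 1),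
          (c' i * h (m - i) + h i * c (m - i))) :=
  formal_complex_structures_homotopic_general CE dE hLeib hmulgr K hvanish c c' hc hc' hc1 hstruct
    hstruct'
end

section
/- Let G be a toroidal grid diagram with exactly one O marked for destabilization. Then every positive enhanced domain (D, ε, ρ) has index I(D, ε, ρ) ≥ 0. -/
/-- A domain on the toroidal grid (a `ℤ`-linear combination of squares,
`D i j` being the multiplicity of the square with lower-left corner at the
intersection point `(i,j)` of the `i`-th horizontal and `j`-th vertical
circle) joining the generators `x` and `y` (generators are matchings, i.e.
permutations, `x` containing the points `(i, x i)`). -/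
def IsGridDomain {n : ℕ} [NeZero n] (D : Fin n → Fin n → ℤ)
    (x y : Equiv.Perm (Fin n)) : Prop :=
  ∀ i j : Fin n,
    D i (j - 1) + D (i - 1) j - D i j - D (i - 1) (j - 1) =
      (if y i = j then 1 else 0) - (if x i = j then 1 else 0)

/-- The average of the four local multiplicities of `D` around the point `(i,j)`. -/
def avgMult {n : ℕ} [NeZero n] (D : Fin n → Fin n → ℤ) (i j : Fin n) : ℚ :=
  ((D i j + D i (j - 1) + D (i - 1) j + D (i - 1) (j - 1) : ℤ) : ℚ) / 4

/-- Lipshitz's index formula `I(D) = ∑_{p ∈ x} n_p(D) + ∑_{p ∈ y} n_p(D)`. -/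
def lipshitzIndex {n : ℕ} [NeZero n] (D : Fin n → Fin n → ℤ)
    (x y : Equiv.Perm (Fin n)) : ℚ :=
  (∑ i, avgMult D i (x i)) + (∑ i, avgMult D i (y i))

/-!
Subtracting `m` times the column annulus `c₀` lowers both `I(D)` and `b + d` by `2m`
(`b = D r₀ c₀`, `d = D (r₀ - 1) c₀`), so we may assume that `D` vanishes somewhere in
column `c₀`. Along the `i`-th horizontal circle the difference between the rows above and
below is a unit step function, jumping at the points of `x` and `y`; hence that circle
contributes at least `|D i c₀ - D (i - 1) c₀| / 2` to `I(D)`. Summed over `i ≠ r₀`, this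
is half the variation of column `c₀` from `b` down to its zero and back up to `d`, so
at least `(b + d) / 2`. The same step-function argument for the difference of columns
`c₀ - 1` and `c₀` shows that the circle `r₀` contributes another `(b + d) / 2`. Thus
`I(D) ≥ b + d`, and `b ≥ f`, `d ≥ f + ε₁` give `I(D) ≥ ε₁ + 2f`.
-/

open Finset

section Variation

variable {G : Type*} [AddCommGroup G] [LinearOrder G] [IsOrderedAddMonoid G]

theorem abs_sub_le_sum_Ico_abs_sub (g : ℕ → G) {a b : ℕ} (hab : a ≤ b) :
    |g b - g a| ≤ ∑ k ∈ Ico a b, |g (k + 1) - g k| := by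
  rw [← sum_Ico_sub g hab]
  exact abs_sum_le_sum_abs _ _

open Fin.NatCast in
/-- The path `s, s + 1, …, s - 1` around the cycle passes through `t`. -/
theorem Fin.abs_sub_add_abs_sub_le_sum_erase {n : ℕ} [NeZero n] (u : Fin n → G) (s t : Fin n) :
    |u s - u t| + |u t - u (s - 1)| ≤ ∑ i ∈ univ.erase s, |u i - u (i - 1)| := by
  obtain ⟨m, rfl⟩ : ∃ m, n = m + 1 := ⟨n - 1, (Nat.succ_pred_eq_of_ne_zero (NeZero.ne n)).symm⟩
  set g : ℕ → G := fun k => u (s + (k : Fin (m + 1)))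
  have hsum : ∑ i ∈ univ.erase s, |u i - u (i - 1)| = ∑ k ∈ range m, |g (k + 1) - g k| := by
    have hrot : ∑ i, |u i - u (i - 1)| =
        ∑ k ∈ range (m + 1), |g k - u (s + (k : Fin (m + 1)) - 1)| := by
      rw [← Fin.sum_univ_eq_sum_range (fun k => |g k - u (s + (k : Fin (m + 1)) - 1)|)]
      simp only [g, Fin.cast_val_eq_self]
      exact (Equiv.sum_comp (Equiv.addLeft s) fun i => |u i - u (i - 1)|).symm
    rw [sum_range_succ', ← add_sum_erase _ _ (mem_univ s)] at hrot
    simp only [g, Nat.cast_zero, add_zero, Nat.cast_succ, ← add_assoc, add_sub_cancel_right]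
      at hrot
    rw [add_comm (∑ k ∈ range m, _)] at hrot
    simpa only [g, Nat.cast_succ, ← add_assoc] using add_left_cancel hrot
  have hk : (t - s).val ≤ m := Nat.lt_succ_iff.mp (t - s).isLt
  have hg0 : g 0 = u s := by simp [g]
  have hgk : g (t - s).val = u t := by simp [g]
  have hgm : g m = u (s - 1) := by
    have : ((m : ℕ) : Fin (m + 1)) = -1 := by
      rw [Fin.natCast_eq_last]
      exact eq_neg_of_add_eq_zero_left (Fin.last_add_one m)
    simp only [g, this, sub_eq_add_neg]
  calc |u s - u t| + |u t - u (s - 1)|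
      = |g (t - s).val - g 0| + |g m - g (t - s).val| := by
        rw [hg0, hgk, hgm, abs_sub_comm (u t) (u s), abs_sub_comm (u (s - 1))]
    _ ≤ ∑ k ∈ Ico 0 (t - s).val, |g (k + 1) - g k| +
          ∑ k ∈ Ico (t - s).val m, |g (k + 1) - g k| :=
        add_le_add (abs_sub_le_sum_Ico_abs_sub g (Nat.zero_le _)) (abs_sub_le_sum_Ico_abs_sub g hk)
    _ = ∑ i ∈ univ.erase s, |u i - u (i - 1)| := by
        rw [← range_eq_Ico, sum_range_add_sum_Ico _ hk, hsum]

end Variation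

theorem Fin.eq_or_eq_sub_one_of_sub_eq_ite {n : ℕ} [NeZero n] {u : Fin n → ℤ} {p q : Fin n}
    (hu : ∀ j, u j - u (j - 1) = (if p = j then 1 else 0) - (if q = j then 1 else 0))
    (j : Fin n) : u j = u p ∨ u j = u (p - 1) := by
  have hvar : |u p - u j| + |u j - u (p - 1)| ≤ 1 := by
    refine (Fin.abs_sub_add_abs_sub_le_sum_erase u p j).trans ?_
    calc ∑ i ∈ univ.erase p, |u i - u (i - 1)|
        = ∑ i ∈ univ.erase p, if q = i then 1 else 0 := sum_congr rfl fun i hi => by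
          rw [hu, if_neg (ne_of_mem_erase hi).symm]; split_ifs <;> simp
      _ ≤ 1 := by rw [sum_ite_eq]; split_ifs <;> norm_num
  have hstep := hu p
  rw [if_pos rfl] at hstep
  rcases abs_cases (u p - u j) with h₁ | h₁ <;> rcases abs_cases (u j - u (p - 1)) with h₂ | h₂ <;>
    split_ifs at hstep <;> omega

theorem four_mul_avgMult {n : ℕ} [NeZero n] (D : Fin n → Fin n → ℤ) (i j : Fin n) :
    4 * avgMult D i j = ((D i j + D i (j - 1) + D (i - 1) j + D (i - 1) (j - 1) : ℤ) : ℚ) := by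
  rw [avgMult]
  ring

section GridDomain

variable {n : ℕ} [NeZero n] {D : Fin n → Fin n → ℤ} {x y : Equiv.Perm (Fin n)}

theorem IsGridDomain.sub_column (hD : IsGridDomain D x y) (c : Fin n) (k : ℤ) :
    IsGridDomain (fun i j => D i j - if j = c then k else 0) x y := by
  intro i j
  have := hD i j
  dsimp only
  linarith

theorem lipshitzIndex_sub_column (c : Fin n) (k : ℤ) :
    lipshitzIndex (fun i j => D i j - if j = c then k else 0) x y =
      lipshitzIndex D x y - 2 * k := by
  set f : Fin n → ℚ := fun j => if j = c then (k : ℚ) else 0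
  have havg : ∀ i j, avgMult (fun i j => D i j - if j = c then k else 0) i j =
      avgMult D i j - (f j + f (j - 1)) / 2 := by
    intro i j
    simp only [avgMult, f]
    push_cast
    ring
  have hsum : ∀ σ : Equiv.Perm (Fin n), ∑ i, (f (σ i) + f (σ i - 1)) / 2 = k := by
    intro σ
    have hshift : ∑ j, f (j - 1) = ∑ j, f j := Equiv.sum_comp (Equiv.subRight 1) f
    rw [Equiv.sum_comp σ (fun j => (f j + f (j - 1)) / 2), ← sum_div, sum_add_distrib, hshift]
    simp [f]
  simp only [lipshitzIndex, havg, sum_sub_distrib, hsum]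
  ring

theorem abs_sub_add_abs_sub_le_four_mul_avgMult (hpos : ∀ i j, 0 ≤ D i j) (i j : Fin n) :
    ((|D i j - D (i - 1) j| + |D i (j - 1) - D (i - 1) (j - 1)| : ℤ) : ℚ) ≤
      4 * avgMult D i j := by
  have key : ∀ a b : ℤ, 0 ≤ a → 0 ≤ b → |a - b| ≤ a + b := fun a b ha hb =>
    abs_sub_le_iff.2 ⟨by linarith, by linarith⟩
  rw [four_mul_avgMult]
  exact_mod_cast by
    linarith [key _ _ (hpos i j) (hpos (i - 1) j), key _ _ (hpos i (j - 1)) (hpos (i - 1) (j - 1))]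

theorem IsGridDomain.one_le_four_mul_avgMult (hD : IsGridDomain D x y) (hpos : ∀ i j, 0 ≤ D i j)
    {i : Fin n} (hxy : x i ≠ y i) : 1 ≤ 4 * avgMult D i (x i) := by
  have hcorner := hD i (x i)
  rw [if_neg hxy.symm, if_pos rfl] at hcorner
  rw [four_mul_avgMult]
  exact_mod_cast by linarith [hpos i (x i - 1), hpos (i - 1) (x i)]

theorem IsGridDomain.abs_sub_le_two_mul_avgMult (hD : IsGridDomain D x y)
    (hpos : ∀ i j, 0 ≤ D i j) (i j : Fin n) :
    ((|D i j - D (i - 1) j| : ℤ) : ℚ) ≤ 2 * (avgMult D i (x i) + avgMult D i (y i)) := by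
  let w : Fin n → ℤ := fun j => D i j - D (i - 1) j
  have hw : ∀ j, w j - w (j - 1) = (if x i = j then 1 else 0) - (if y i = j then 1 else 0) :=
    fun j => by have := hD i j; simp only [w]; linarith
  have hw' : ∀ j, (-w) j - (-w) (j - 1) =
      (if y i = j then 1 else 0) - (if x i = j then 1 else 0) :=
    fun j => by simp only [Pi.neg_apply]; linarith [hw j]
  have hx : |w j| ≤ |w (x i)| + |w (x i - 1)| := by
    rcases Fin.eq_or_eq_sub_one_of_sub_eq_ite hw j with h | h <;> rw [h] <;> simp
  have hy : |w j| ≤ |w (y i)| + |w (y i - 1)| := by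
    rcases Fin.eq_or_eq_sub_one_of_sub_eq_ite hw' j with h | h <;>
      simp only [Pi.neg_apply, neg_inj] at h <;> rw [h] <;> simp
  have h4x := abs_sub_add_abs_sub_le_four_mul_avgMult hpos i (x i)
  have h4y := abs_sub_add_abs_sub_le_four_mul_avgMult hpos i (y i)
  have hxQ : ((|w j| : ℤ) : ℚ) ≤ ((|w (x i)| + |w (x i - 1)| : ℤ) : ℚ) := by exact_mod_cast hx
  have hyQ : ((|w j| : ℤ) : ℚ) ≤ ((|w (y i)| + |w (y i - 1)| : ℤ) : ℚ) := by exact_mod_cast hy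
  simp only [w] at hxQ hyQ
  linarith

theorem IsGridDomain.add_le_two_mul_avgMult_of_eq_zero (hD : IsGridDomain D x y)
    (hpos : ∀ i j, 0 ≤ D i j) {r₀ c₀ i₀ : Fin n} (hdest : y r₀ = c₀) (hi₀ : D i₀ c₀ = 0) :
    ((D r₀ c₀ + D (r₀ - 1) c₀ : ℤ) : ℚ) ≤ 2 * (avgMult D r₀ (x r₀) + avgMult D r₀ (y r₀)) := by
  let v : Fin n → ℤ := fun i => D i (c₀ - 1) - D i c₀
  have hv : ∀ i, v i - v (i - 1) =
      (if r₀ = i then 1 else 0) - (if x.symm c₀ = i then 1 else 0) := by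
    intro i
    have hy : y i = c₀ ↔ r₀ = i := by rw [← hdest, y.apply_eq_iff_eq, eq_comm]
    have hx : x i = c₀ ↔ x.symm c₀ = i := by rw [← x.eq_symm_apply, eq_comm]
    have := hD i c₀
    simp only [hy, hx] at this
    simp only [v]
    linarith
  -- `v` jumps up at `r₀`, down at `x⁻¹ c₀`, and `v i₀ ≥ 0`: so `v r₀ ≥ 0` and `v (r₀ - 1) ≥ -1`.
  have hv₀ : 0 ≤ v i₀ := by simp only [v, hi₀]; linarith [hpos i₀ (c₀ - 1)]
  have hstep := hv r₀
  have htwo := Fin.eq_or_eq_sub_one_of_sub_eq_ite hv i₀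
  have hb : (0 : ℚ) ≤ D r₀ c₀ := by exact_mod_cast hpos r₀ c₀
  have hd : (0 : ℚ) ≤ D (r₀ - 1) c₀ := by exact_mod_cast hpos (r₀ - 1) c₀
  have h4y := four_mul_avgMult D r₀ (y r₀)
  rw [hdest] at h4y ⊢
  by_cases hxr : x r₀ = c₀
  · rw [if_pos rfl, if_pos (x.symm_apply_eq.2 hxr.symm)] at hstep
    have hac : ((D r₀ c₀ + D (r₀ - 1) c₀ : ℤ) : ℚ) ≤
        ((D r₀ (c₀ - 1) + D (r₀ - 1) (c₀ - 1) : ℤ) : ℚ) := by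
      exact_mod_cast by simp only [v] at hstep htwo hv₀; omega
    rw [hxr]
    push_cast at *
    linarith
  · rw [if_pos rfl, if_neg (fun h => hxr (x.symm_apply_eq.1 h).symm)] at hstep
    have h4x := hD.one_le_four_mul_avgMult hpos (i := r₀) (by rwa [hdest])
    have hac : ((D r₀ c₀ + D (r₀ - 1) c₀ - 1 : ℤ) : ℚ) ≤
        ((D r₀ (c₀ - 1) + D (r₀ - 1) (c₀ - 1) : ℤ) : ℚ) := by
      exact_mod_cast by simp only [v] at hstep htwo hv₀; omega
    push_cast at *
    linarith

theorem IsGridDomain.add_le_lipshitzIndex_of_eq_zero (hD : IsGridDomain D x y)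
    (hpos : ∀ i j, 0 ≤ D i j) {r₀ c₀ i₀ : Fin n} (hdest : y r₀ = c₀) (hi₀ : D i₀ c₀ = 0) :
    ((D r₀ c₀ + D (r₀ - 1) c₀ : ℤ) : ℚ) ≤ lipshitzIndex D x y := by
  have hsplit : lipshitzIndex D x y = (avgMult D r₀ (x r₀) + avgMult D r₀ (y r₀)) +
      ∑ i ∈ univ.erase r₀, (avgMult D i (x i) + avgMult D i (y i)) := by
    rw [lipshitzIndex, ← sum_add_distrib, ← add_sum_erase _ _ (mem_univ r₀)]
  have hvar := Fin.abs_sub_add_abs_sub_le_sum_erase (fun i => D i c₀) r₀ i₀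
  simp only [hi₀, sub_zero, zero_sub, abs_neg, abs_of_nonneg (hpos _ _)] at hvar
  have hvarQ : ((D r₀ c₀ + D (r₀ - 1) c₀ : ℤ) : ℚ) ≤
      ((∑ i ∈ univ.erase r₀, |D i c₀ - D (i - 1) c₀| : ℤ) : ℚ) := by
    exact_mod_cast hvar
  have hrows : ((∑ i ∈ univ.erase r₀, |D i c₀ - D (i - 1) c₀| : ℤ) : ℚ) ≤
      2 * ∑ i ∈ univ.erase r₀, (avgMult D i (x i) + avgMult D i (y i)) := by
    push_cast
    rw [mul_sum]
    exact sum_le_sum fun i _ => by exact_mod_cast hD.abs_sub_le_two_mul_avgMult hpos i c₀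
  have hr₀ := hD.add_le_two_mul_avgMult_of_eq_zero hpos hdest hi₀
  linarith

theorem IsGridDomain.add_le_lipshitzIndex (hD : IsGridDomain D x y) (hpos : ∀ i j, 0 ≤ D i j)
    {r₀ c₀ : Fin n} (hdest : y r₀ = c₀) :
    ((D r₀ c₀ + D (r₀ - 1) c₀ : ℤ) : ℚ) ≤ lipshitzIndex D x y := by
  obtain ⟨i₀, -, hmin⟩ := exists_min_image univ (fun i => D i c₀) univ_nonempty
  have hpos' : ∀ i j, 0 ≤ D i j - if j = c₀ then D i₀ c₀ else 0 := by
    intro i j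
    split_ifs with h
    · subst h; linarith [hmin i (mem_univ i)]
    · linarith [hpos i j]
  have key := (hD.sub_column c₀ (D i₀ c₀)).add_le_lipshitzIndex_of_eq_zero hpos' hdest
    (i₀ := i₀) (by simp)
  simp only [lipshitzIndex_sub_column, if_true] at key
  push_cast at key ⊢
  linarith

end GridDomain

/-- Here `f = D r₀ c₀ - ρ` is the fake multiplicity, `b = D r₀ c₀` the multiplicity of the
`O`-square and `d = D (r₀ - 1) c₀` that of the square below it. -/
theorem one_destabilization_nonnegative_index_general
    {n : ℕ} [NeZero n] (D : Fin n → Fin n → ℤ) (x y : Equiv.Perm (Fin n))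
    (r₀ c₀ : Fin n) (ρ : ℤ) (ε : ℕ)
    (hdest : y r₀ = c₀)
    (hDom : IsGridDomain D x y)
    (hpos : ∀ i j, 0 ≤ D i j)
    (hb : D r₀ c₀ ≥ D r₀ c₀ - ρ)
    (hd : D (r₀ - 1) c₀ ≥ D r₀ c₀ - ρ + (ε : ℤ)) :
    0 ≤ lipshitzIndex D x y - (ε : ℚ) - 2 * ((D r₀ c₀ - ρ : ℤ) : ℚ) := by
  have hI := hDom.add_le_lipshitzIndex hpos hdest
  have hfd : ((ε + 2 * (D r₀ c₀ - ρ) : ℤ) : ℚ) ≤ ((D r₀ c₀ + D (r₀ - 1) c₀ : ℤ) : ℚ) := by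
    exact_mod_cast by linarith
  push_cast at hI hfd ⊢
  linarith

/-- Proposition 3.3 of Manolescu–Ozsváth–Thurston: for a grid
with exactly one `O`-marking (in the square `(r₀,c₀)`) marked for
destabilization, every positive enhanced domain `(D, ε₁, ρ₁)` — i.e. `D ≥ 0`
and, with `f = O_{i₁}(D) − ρ₁` and local multiplicities `a` (above-left),
`b = D r₀ c₀` (above-right, the `O`-square), `c` (below-left), `d`
(below-right) around the destabilization point `(r₀,c₀) ∈ y`, one has
`a ≥ f`, `b ≥ f`, `c ≥ f + ε₁ − 1`, `d ≥ f + ε₁` — has index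
`I(D,ε,ρ) = I(D) − ε₁ − 2f ≥ 0`. -/
theorem one_destabilization_nonnegative_index
    {n : ℕ} [NeZero n] (D : Fin n → Fin n → ℤ) (x y : Equiv.Perm (Fin n))
    (r₀ c₀ : Fin n) (ρ : ℤ) (ε : ℕ) (hε : ε ≤ 1)
    (hdest : y r₀ = c₀)
    (hDom : IsGridDomain D x y)
    (hpos : ∀ i j, 0 ≤ D i j)
    (ha : D r₀ (c₀ - 1) ≥ D r₀ c₀ - ρ)
    (hb : D r₀ c₀ ≥ D r₀ c₀ - ρ)
    (hc : D (r₀ - 1) (c₀ - 1) ≥ D r₀ c₀ - ρ + (ε : ℤ) - 1)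
    (hd : D (r₀ - 1) c₀ ≥ D r₀ c₀ - ρ + (ε : ℤ)) :
    0 ≤ lipshitzIndex D x y - (ε : ℚ) - 2 * ((D r₀ c₀ - ρ : ℤ) : ℚ) :=
  one_destabilization_nonnegative_index_general D x y r₀ c₀ ρ ε hdest hDom hpos hb hd
end

section
/- The set of positive pairs spans a subcomplex of the Hom complex: if [x, ỹ] is a positive pair and [x', ỹ'] appears in its differential d[x,ỹ] = [∂*x, ỹ] + [x, ∂ỹ] (i.e., is obtained by pre- or post-composing with an empty rectangle), then [x', ỹ'] is also a positive pair. -/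
/-- Positivity of an enhanced domain `(D, ε, ρ)` with destabilized `O`'s at
the squares `Opos j`: nonnegative multiplicities everywhere, and at each
destabilization point, with `f_j = O_{i_j}(D) − ρ_j`, the four local
multiplicities satisfy `a_j ≥ f_j`, `b_j ≥ f_j`, `c_j ≥ f_j + ε_j − 1`,
`d_j ≥ f_j + ε_j`. -/
def PositiveEnhanced {n k : ℕ} [NeZero n] (Opos : Fin k → Fin n × Fin n)
    (D : Fin n → Fin n → ℤ) (ε : Fin k → ℕ) (ρ : Fin k → ℤ) : Prop :=
  (∀ i j, 0 ≤ D i j) ∧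
  ∀ j, D (Opos j).1 ((Opos j).2 - 1) ≥ D (Opos j).1 (Opos j).2 - ρ j ∧
    D (Opos j).1 (Opos j).2 ≥ D (Opos j).1 (Opos j).2 - ρ j ∧
    D ((Opos j).1 - 1) ((Opos j).2 - 1) ≥
      D (Opos j).1 (Opos j).2 - ρ j + (ε j : ℤ) - 1 ∧
    D ((Opos j).1 - 1) (Opos j).2 ≥
      D (Opos j).1 (Opos j).2 - ρ j + (ε j : ℤ)

/-- positive pairs span a subcomplex of the Hom complex: if
`[x, ỹ]` is positive (represented by a positive enhanced domain `(D, ε, ρ)`)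
and another pair is obtained by pre-composing with an empty rectangle `R`
(a nonnegative domain from `x'` to `x`) or post-composing with an empty
rectangle `R` (from `y` to `y'`, keeping the destabilization points in `y'`),
then the new pair is represented by the positive enhanced domain
`(D + R, ε, ρ')`, where `ρ'_j = ρ_j + R(O_{i_j})` (crossing a destabilized `O`
raises `ρ_j` and `t_j` by one, leaving `f_j` unchanged). -/
theorem positive_pairs_closed_under_differential
    {n k : ℕ} [NeZero n] (Opos : Fin k → Fin n × Fin n)
    (x y x' y' : Equiv.Perm (Fin n))
    (D R : Fin n → Fin n → ℤ) (ε : Fin k → ℕ) (ρ : Fin k → ℤ)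
    (hy : ∀ j, y (Opos j).1 = (Opos j).2)
    (hD : IsGridDomain D x y)
    (hpos : PositiveEnhanced Opos D ε ρ)
    (hR : ∀ i j, 0 ≤ R i j) :
    (IsGridDomain R x' x →
      IsGridDomain (fun i j => D i j + R i j) x' y ∧
      PositiveEnhanced Opos (fun i j => D i j + R i j) ε
        (fun j => ρ j + R (Opos j).1 (Opos j).2)) ∧
    (IsGridDomain R y y' → (∀ j, y' (Opos j).1 = (Opos j).2) →
      IsGridDomain (fun i j => D i j + R i j) x y' ∧
      PositiveEnhanced Opos (fun i j => D i j + R i j) ε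
        (fun j => ρ j + R (Opos j).1 (Opos j).2)) := by
  obtain ⟨hDnn, hloc⟩ := hpos
  have hpos' : PositiveEnhanced Opos (fun i j => D i j + R i j) ε
      (fun j => ρ j + R (Opos j).1 (Opos j).2) := by
    refine ⟨fun i j => add_nonneg (hDnn i j) (hR i j), fun j => ?_⟩
    obtain ⟨h1, h2, h3, h4⟩ := hloc j
    refine ⟨?_, ?_, ?_, ?_⟩ <;> simp only [] <;>
      [ (have := hR (Opos j).1 ((Opos j).2 - 1); linarith);
        (have := hR (Opos j).1 (Opos j).2; linarith);
        (have := hR ((Opos j).1 - 1) ((Opos j).2 - 1); linarith);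
        (have := hR ((Opos j).1 - 1) (Opos j).2; linarith) ]
  constructor
  · intro hRx
    refine ⟨fun i j => ?_, hpos'⟩
    have h1 := hD i j
    have h2 := hRx i j
    simp only []
    linarith
  · intro hRy _
    refine ⟨fun i j => ?_, hpos'⟩
    have h1 := hD i j
    have h2 := hRy i j
    simp only []
    linarith
end
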